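/- For N ≥ 2, let m = Δ_1 + ⋯ + Δ_N be a regular multisegment with b_1 > b_2 > ⋯ > b_N whose associated permutation σ_m avoids the patterns 4231 and 3412. Then m has at least two distinct good segments. -/

import Mathlib

/-- A segment `[a;b]` is a pair of integers `a ≤ b`. -/
structure Segment where
  a : ℤ
  b : ℤ
  le : a ≤ b

namespace Segment

/-- `Δ ≺ Δ'` : the segment `Δ = [a;b]` precedes `Δ' = [c;d]`,
i.e. `a < c`, `c - 1 ≤ b` and `b < d`. -/
def prec (Δ Δ' : Segment) : Prop :=
  Δ.a < Δ'.a ∧ Δ'.a - 1 ≤ Δ.b ∧ Δ.b < Δ'.b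

/-- `←Δ = [a-1; b-1]`. -/
def shift (Δ : Segment) : Segment :=
  ⟨Δ.a - 1, Δ.b - 1, by have := Δ.le; omega⟩

instance (Δ Δ' : Segment) : Decidable (Δ.prec Δ') := by
  unfold prec; infer_instance

end Segment

/-- A multisegment (given as an indexed family of segments) is regular if the beginnings
of its segments are pairwise distinct and the ends of its segments are pairwise distinct. -/
def Regular {ι : Type*} (Δ : ι → Segment) : Prop :=
  (∀ i j : ι, (Δ i).a = (Δ j).a → i = j) ∧ (∀ i j : ι, (Δ i).b = (Δ j).b → i = j)

/-- The condition `LC(Δ₀, m)` : there is an injective function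
`f : X_{Δ₀,m} → Y_{Δ₀,m}` with `Δ_{f i} ≺ Δ_i` for all `i ∈ X_{Δ₀,m}`,
where `X_{Δ₀,m} = {i | Δ₀ ≺ Δ_i}` and `Y_{Δ₀,m} = {i | ←Δ₀ ≺ Δ_i}`. -/
def LC {ι : Type*} (Δ₀ : Segment) (Δ : ι → Segment) : Prop :=
  ∃ f : ι → ι, Set.InjOn f {i | Δ₀.prec (Δ i)} ∧
    ∀ i : ι, Δ₀.prec (Δ i) → Δ₀.shift.prec (Δ (f i)) ∧ (Δ (f i)).prec (Δ i)

/-- The condition `RC(Δ₀, m)` : there is an injective function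
`f : X̃_{Δ₀,m} → Ỹ_{Δ₀,m}` with `Δ_i ≺ Δ_{f i}` for all `i ∈ X̃_{Δ₀,m}`,
where `X̃_{Δ₀,m} = {i | Δ_i ≺ Δ₀}` and `Ỹ_{Δ₀,m} = {i | ←Δ_i ≺ Δ₀}`. -/
def RC {ι : Type*} (Δ₀ : Segment) (Δ : ι → Segment) : Prop :=
  ∃ f : ι → ι, Set.InjOn f {i | (Δ i).prec Δ₀} ∧
    ∀ i : ι, (Δ i).prec Δ₀ → (Δ (f i)).shift.prec Δ₀ ∧ (Δ i).prec (Δ (f i))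

/-- `Δ_{i₀}` is a good left segment of the multisegment `m` given by the family `Δ` :
`LC(Δ_{i₀}, m)`, `RC(Δ_{i₀}, m)` and `LC(Δ_{i₀}, m∖Δ_{i₀})` all hold. -/
def GoodLeft {ι : Type*} (Δ : ι → Segment) (i₀ : ι) : Prop :=
  LC (Δ i₀) Δ ∧ RC (Δ i₀) Δ ∧ LC (Δ i₀) (fun i : {i : ι // i ≠ i₀} => Δ i.val)

/-- `Δ_{i₀}` is a good right segment of the multisegment `m` given by the family `Δ` :
`LC(Δ_{i₀}, m)`, `RC(Δ_{i₀}, m)` and `RC(Δ_{i₀}, m∖Δ_{i₀})` all hold. -/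
def GoodRight {ι : Type*} (Δ : ι → Segment) (i₀ : ι) : Prop :=
  LC (Δ i₀) Δ ∧ RC (Δ i₀) Δ ∧ RC (Δ i₀) (fun i : {i : ι // i ≠ i₀} => Δ i.val)

/-- A good segment is one which is good left or good right. -/
def Good {ι : Type*} (Δ : ι → Segment) (i₀ : ι) : Prop :=
  GoodLeft Δ i₀ ∨ GoodRight Δ i₀

/-- `σ ∈ S_N` contains the pattern `τ ∈ S_k` : there are indices `i_1 < ⋯ < i_k` with
`σ(i_s) < σ(i_t) ↔ τ(s) < τ(t)` for all `s, t`. -/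
def ContainsPattern {N k : ℕ} (σ : Equiv.Perm (Fin N)) (τ : Equiv.Perm (Fin k)) : Prop :=
  ∃ g : Fin k ↪o Fin N, ∀ s t : Fin k, σ (g s) < σ (g t) ↔ τ s < τ t

/-- `σ` avoids the pattern `τ`. -/
def Avoids {N k : ℕ} (σ : Equiv.Perm (Fin N)) (τ : Equiv.Perm (Fin k)) : Prop :=
  ¬ ContainsPattern σ τ

/-- The pattern `4231` (in one-line notation), as a permutation of `Fin 4`. -/
def perm4231 : Equiv.Perm (Fin 4) := Equiv.swap 0 3

/-- The pattern `3412` (in one-line notation), as a permutation of `Fin 4`. -/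
def perm3412 : Equiv.Perm (Fin 4) := Equiv.swap 0 2 * Equiv.swap 1 3

/-
Write `a i` for the beginnings; since `σ` sorts `a`, the sequence `a` avoids `4231` and `3412`.
The segment `Δ_u` is good left as soon as `a u` is a left-to-right maximum and the later
beginnings below `a u` decrease: as the ends decrease, no segment then follows `Δ_u`, and
matching each `Δ_i ≺ Δ_u` with the segment of next larger end proves `RC`. Dually for good
right. If the last term has no ascent above it, it is good right; otherwise pattern avoidance
forces `a` to decrease after its maximum, which is then good left. The same holds for the first
term and the minimum, and these four candidates always give two distinct good segments.
-/

open Function OrderDual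

namespace Segment

def dual (Δ : Segment) : Segment :=
  ⟨-Δ.b, -Δ.a, neg_le_neg Δ.le⟩

theorem dual_prec_dual {Δ Δ' : Segment} : Δ.dual.prec Δ'.dual ↔ Δ'.prec Δ := by
  simp only [prec, dual]
  omega

theorem shift_dual_prec_dual {Δ Δ' : Segment} :
    Δ.dual.shift.prec Δ'.dual ↔ Δ'.shift.prec Δ := by
  simp only [prec, dual, shift]
  omega

end Segment

section Conditions

variable {ι : Type*} {Δ₀ : Segment} {Δ : ι → Segment}

theorem LC_iff_RC_dual : LC Δ₀ Δ ↔ RC Δ₀.dual fun i => (Δ i).dual := by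
  simp only [LC, RC, Segment.dual_prec_dual, Segment.shift_dual_prec_dual]

theorem LC_of_forall_not_prec (h : ∀ i, ¬Δ₀.prec (Δ i)) : LC Δ₀ Δ :=
  ⟨id, Set.injOn_id _, fun i hi => (h i hi).elim⟩

theorem RC_of_forall_not_prec (h : ∀ i, ¬(Δ i).prec Δ₀) : RC Δ₀ Δ :=
  ⟨id, Set.injOn_id _, fun i hi => (h i hi).elim⟩

/-- The matching sends `Δ_i ≺ Δ_u` to the segment of `{Δ_u} ∪ X̃` whose end comes next after
that of `Δ_i`; the monotonicity hypothesis is what makes it a precedence. -/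
theorem RC_self_of_lt_imp_lt [Finite ι] {u : ι} (hb : Injective fun i => (Δ i).b)
    (hmono : ∀ i j, (Δ i).prec (Δ u) → (Δ j).prec (Δ u) → (Δ i).b < (Δ j).b →
      (Δ i).a < (Δ j).a) :
    RC (Δ u) Δ := by
  have hnext : ∀ i, ∃ j, (Δ i).prec (Δ u) → (j = u ∨ (Δ j).prec (Δ u)) ∧
      (Δ i).b < (Δ j).b ∧ ∀ k, k = u ∨ (Δ k).prec (Δ u) → (Δ i).b < (Δ k).b →
        (Δ j).b ≤ (Δ k).b := by
    intro i
    by_cases hi : (Δ i).prec (Δ u)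
    · obtain ⟨j, ⟨hj, hij⟩, hmin⟩ :=
        Set.exists_min_image {j | (j = u ∨ (Δ j).prec (Δ u)) ∧ (Δ i).b < (Δ j).b}
          (fun j => (Δ j).b) (Set.toFinite _) ⟨u, Or.inl rfl, hi.2.2⟩
      exact ⟨j, fun _ => ⟨hj, hij, fun k hk hik => hmin k ⟨hk, hik⟩⟩⟩
    · exact ⟨i, fun h => absurd h hi⟩
  choose f hf using hnext
  refine ⟨f, fun i₁ h₁ i₂ h₂ hf₁₂ => ?_, fun i hi => ?_⟩
  · by_contra hne
    wlog hlt : (Δ i₁).b < (Δ i₂).b generalizing i₁ i₂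
    · exact this i₂ h₂ i₁ h₁ hf₁₂.symm (Ne.symm hne)
        ((not_lt.1 hlt).lt_of_ne (hb.ne (Ne.symm hne)))
    have hle := (hf i₁ h₁).2.2 i₂ (Or.inr h₂) hlt
    have hgt := (hf i₂ h₂).2.1
    rw [hf₁₂] at hle
    exact hle.not_gt hgt
  · obtain ⟨hj, hij, -⟩ := hf i hi
    have hju : (Δ (f i)).a ≤ (Δ u).a ∧ (Δ (f i)).b ≤ (Δ u).b := by
      rcases hj with hj | hj
      · rw [hj]; exact ⟨le_rfl, le_rfl⟩
      · exact ⟨hj.1.le, hj.2.2.le⟩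
    have hai : (Δ i).a < (Δ (f i)).a := by
      rcases hj with hj | hj
      · rw [hj]; exact hi.1
      · exact hmono i _ hi hj hij
    obtain ⟨h₁, h₂, -⟩ := hi
    simp only [Segment.prec, Segment.shift]
    omega

theorem LC_self_of_lt_imp_lt [Finite ι] {u : ι} (ha : Injective fun i => (Δ i).a)
    (hmono : ∀ i j, (Δ u).prec (Δ i) → (Δ u).prec (Δ j) → (Δ i).a < (Δ j).a →
      (Δ i).b < (Δ j).b) :
    LC (Δ u) Δ := by
  refine LC_iff_RC_dual.2 (RC_self_of_lt_imp_lt (Δ := fun i => (Δ i).dual) ?_ ?_)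
  · exact fun i j h => ha (neg_inj.1 h)
  · intro i j hi hj hij
    exact neg_lt_neg (hmono j i (Segment.dual_prec_dual.1 hj) (Segment.dual_prec_dual.1 hi)
      (neg_lt_neg_iff.1 hij))

theorem goodLeft_of_forall_not_prec {u : ι} (h : ∀ i, ¬(Δ u).prec (Δ i)) (hRC : RC (Δ u) Δ) :
    GoodLeft Δ u :=
  ⟨LC_of_forall_not_prec h, hRC, LC_of_forall_not_prec fun i => h i⟩

theorem goodRight_of_forall_not_prec {u : ι} (h : ∀ i, ¬(Δ i).prec (Δ u)) (hLC : LC (Δ u) Δ) :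
    GoodRight Δ u :=
  ⟨hLC, RC_of_forall_not_prec h, RC_of_forall_not_prec fun i => h i⟩

end Conditions

section Sequences

variable {ι α : Type*} [LinearOrder ι] [LinearOrder α] {a : ι → α}

def Has4231 (a : ι → α) : Prop :=
  ∃ i j k l, i < j ∧ j < k ∧ k < l ∧ a l < a j ∧ a j < a k ∧ a k < a i

def Has3412 (a : ι → α) : Prop :=
  ∃ i j k l, i < j ∧ j < k ∧ k < l ∧ a k < a l ∧ a l < a i ∧ a i < a j

def IsLeftGood (a : ι → α) (u : ι) : Prop :=
  (∀ i < u, a i < a u) ∧ ∀ s t, u < s → s < t → a t < a u → a t < a s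

def IsRightGood (a : ι → α) (u : ι) : Prop :=
  (∀ i, u < i → a u < a i) ∧ ∀ s t, s < t → t < u → a u < a s → a t < a s

def IsGood (a : ι → α) (u : ι) : Prop :=
  IsLeftGood a u ∨ IsRightGood a u

theorem Has4231.of_dual : Has4231 (toDual ∘ a ∘ ofDual) → Has4231 a :=
  fun ⟨i, j, k, l, hij, hjk, hkl, h₁, h₂, h₃⟩ => ⟨l, k, j, i, hkl, hjk, hij, h₃, h₂, h₁⟩

theorem Has3412.of_dual : Has3412 (toDual ∘ a ∘ ofDual) → Has3412 a :=
  fun ⟨i, j, k, l, hij, hjk, hkl, h₁, h₂, h₃⟩ => ⟨l, k, j, i, hkl, hjk, hij, h₃, h₂, h₁⟩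

theorem isLeftGood_dual {u : ι} :
    IsLeftGood (toDual ∘ a ∘ ofDual) (toDual u) ↔ IsRightGood a u :=
  ⟨fun h => ⟨h.1, fun s t hst htu hus => h.2 t s htu hst hus⟩,
    fun h => ⟨h.1, fun s t hus hts hut => h.2 t s hts hus hut⟩⟩

theorem isRightGood_dual {u : ι} :
    IsRightGood (toDual ∘ a ∘ ofDual) (toDual u) ↔ IsLeftGood a u :=
  ⟨fun h => ⟨h.1, fun s t hus hst hut => h.2 t s hst hus hut⟩,
    fun h => ⟨h.1, fun s t hst htu hus => h.2 t s htu hst hus⟩⟩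

theorem isGood_dual {u : ι} : IsGood (toDual ∘ a ∘ ofDual) (toDual u) ↔ IsGood a u :=
  isLeftGood_dual.or isRightGood_dual |>.trans or_comm

/-- For the last index `z`, `¬IsRightGood a z` means that some ascent lies above `a z`. -/
theorem isLeftGood_of_not_isRightGood (ha : Injective a) (h4231 : ¬Has4231 a)
    (h3412 : ¬Has3412 a) {p z : ι} (hp : ∀ i, a i ≤ a p) (hz : ∀ i, i ≤ z)
    (hzR : ¬IsRightGood a z) : IsLeftGood a p := by
  obtain ⟨i, j, hij, hzi, haij⟩ : ∃ i j, i < j ∧ a z < a i ∧ a i < a j := by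
    by_contra! h
    exact hzR ⟨fun i hi => absurd (hz i) hi.not_ge,
      fun s t hst _ hzs => (h s t hst hzs).lt_of_ne (ha.ne hst.ne')⟩
  have hltp : ∀ {x}, x ≠ p → a x < a p := fun hx => (hp _).lt_of_ne (ha.ne hx)
  have hltz : ∀ {x}, a z < a x → x < z := fun hx =>
    (hz _).lt_of_ne fun h => hx.ne' (congrArg a h)
  refine ⟨fun x hx => hltp hx.ne, fun s t hps hst _ => ?_⟩
  by_contra hts
  have hast : a s < a t := (not_lt.1 hts).lt_of_ne (ha.ne hst.ne)
  rcases lt_or_gt_of_ne (ha.ne (hst.trans_le (hz t)).ne) with hsz | hzs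
  · have hip : i ≠ p := fun h => (haij.trans_le (hp j)).ne (congrArg a h)
    rcases lt_or_gt_of_ne hip with hip | hpi
    · exact h3412 ⟨i, p, s, z, hip, hps, hst.trans_le (hz t), hsz, hzi, hltp hip.ne⟩
    · exact h4231 ⟨p, i, j, z, hpi, hij, hltz (hzi.trans haij), hzi, haij,
        hltp (hpi.trans hij).ne'⟩
  · exact h4231 ⟨p, s, t, z, hps, hst, hltz (hzs.trans hast), hzs, hast,
      hltp (hps.trans hst).ne'⟩

theorem exists_ne_isGood_of_not_isRightGood [Finite ι] [Nontrivial ι] (ha : Injective a)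
    (h4231 : ¬Has4231 a) (h3412 : ¬Has3412 a) {z : ι} (hz : ∀ i, i ≤ z)
    (hzR : ¬IsRightGood a z) : ∃ u v, u ≠ v ∧ IsGood a u ∧ IsGood a v := by
  obtain ⟨p, hp⟩ := Finite.exists_max a
  obtain ⟨q, hq⟩ := Finite.exists_min a
  obtain ⟨w, hw⟩ : ∃ w : ι, ∀ i, w ≤ i := Finite.exists_min id
  have hpL : IsLeftGood a p := isLeftGood_of_not_isRightGood ha h4231 h3412 hp hz hzR
  by_cases hwL : IsLeftGood a w
  · refine ⟨p, w, ?_, Or.inl hpL, Or.inl hwL⟩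
    rintro rfl
    refine hzR ⟨fun i hi => absurd (hz i) hi.not_ge, fun s t hst _ _ => ?_⟩
    rcases (hw s).eq_or_lt with rfl | hps
    · exact (hp t).lt_of_ne (ha.ne hst.ne')
    · exact hwL.2 s t hps hst ((hp t).lt_of_ne (ha.ne (hps.trans hst).ne'))
  · have hqR : IsRightGood a q := isLeftGood_dual.1 <|
      isLeftGood_of_not_isRightGood (a := toDual ∘ a ∘ ofDual) ha
        (mt Has4231.of_dual h4231) (mt Has3412.of_dual h3412) (p := toDual q) hq
        (z := toDual w) hw (isRightGood_dual.not.2 hwL)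
    refine ⟨p, q, ?_, Or.inl hpL, Or.inr hqR⟩
    rintro rfl
    obtain ⟨x, y, hxy⟩ := exists_pair_ne ι
    exact hxy (ha (((hp x).antisymm (hq x)).trans ((hp y).antisymm (hq y)).symm))

theorem exists_ne_isGood [Finite ι] [Nontrivial ι] (ha : Injective a) (h4231 : ¬Has4231 a)
    (h3412 : ¬Has3412 a) : ∃ u v, u ≠ v ∧ IsGood a u ∧ IsGood a v := by
  obtain ⟨w, hw⟩ : ∃ w : ι, ∀ i, w ≤ i := Finite.exists_min id
  obtain ⟨z, hz⟩ : ∃ z : ι, ∀ i, i ≤ z := Finite.exists_max id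
  by_cases hzR : IsRightGood a z
  · by_cases hwL : IsLeftGood a w
    · obtain ⟨x, y, hxy⟩ := exists_pair_ne ι
      refine ⟨w, z, fun h => hxy ?_, Or.inl hwL, Or.inr hzR⟩
      exact le_antisymm (h ▸ hz x |>.trans (hw y)) (h ▸ hz y |>.trans (hw x))
    · obtain ⟨u, v, huv, hu, hv⟩ := exists_ne_isGood_of_not_isRightGood
        (a := toDual ∘ a ∘ ofDual) ha (mt Has4231.of_dual h4231) (mt Has3412.of_dual h3412)
        (z := toDual w) hw (isRightGood_dual.not.2 hwL)
      exact ⟨ofDual u, ofDual v, huv, isGood_dual.1 hu, isGood_dual.1 hv⟩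
  · exact exists_ne_isGood_of_not_isRightGood ha h4231 h3412 hz hzR

end Sequences

section Sorted

variable {ι : Type*} [LinearOrder ι] [Finite ι] {Δ : ι → Segment}

theorem goodLeft_of_isLeftGood (hb : StrictAnti fun i => (Δ i).b) {u : ι}
    (h : IsLeftGood (fun i => (Δ i).a) u) : GoodLeft Δ u := by
  refine goodLeft_of_forall_not_prec (fun i hi => ?_) (RC_self_of_lt_imp_lt hb.injective ?_)
  · exact (h.1 i (hb.lt_iff_gt.1 hi.2.2)).not_gt hi.1
  · intro i j hi hj hij
    exact h.2 j i (hb.lt_iff_gt.1 hj.2.2) (hb.lt_iff_gt.1 hij) hi.1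

theorem goodRight_of_isRightGood (hb : StrictAnti fun i => (Δ i).b)
    (ha : Injective fun i => (Δ i).a) {u : ι} (h : IsRightGood (fun i => (Δ i).a) u) :
    GoodRight Δ u := by
  refine goodRight_of_forall_not_prec (fun i hi => ?_) (LC_self_of_lt_imp_lt ha ?_)
  · exact (h.1 i (hb.lt_iff_gt.1 hi.2.2)).not_gt hi.1
  · intro i j hi hj hij
    refine hb.lt_iff_gt.2 (lt_of_not_ge fun hij' => ?_)
    rcases hij'.eq_or_lt with rfl | hij'
    · exact hij.false
    · exact (h.2 i j hij' (hb.lt_iff_gt.1 hj.2.2) hi.1).not_gt hij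

theorem good_of_isGood (hb : StrictAnti fun i => (Δ i).b) (ha : Injective fun i => (Δ i).a)
    {u : ι} (h : IsGood (fun i => (Δ i).a) u) : Good Δ u :=
  h.imp (goodLeft_of_isLeftGood hb) (goodRight_of_isRightGood hb ha)

end Sorted

section Patterns

variable {N k : ℕ} {α : Type*} [LinearOrder α] {σ : Equiv.Perm (Fin N)} {a : Fin N → α}

/-- When `σ` sorts `a`, an occurrence `p` in `a` of the inverse of `τ` is an occurrence of `τ`
in `σ`, at the positions `σ⁻¹ (p (τ s))`. -/
theorem containsPattern_of_strictMono {τ : Equiv.Perm (Fin k)} (hσ : StrictMono (a ∘ σ))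
    {p : Fin k → Fin N} (hp : StrictMono p) (hpτ : StrictMono (a ∘ p ∘ τ)) :
    ContainsPattern σ τ := by
  have hmono : StrictMono fun s => σ.symm (p (τ s)) := fun s t hst => by
    rw [← hσ.lt_iff_lt]
    simpa using hpτ hst
  exact ⟨OrderEmbedding.ofStrictMono _ hmono, fun s t => by simpa using hp.lt_iff_lt⟩

theorem strictMono_fin_four {β : Type*} [Preorder β] {f : Fin 4 → β} (h₀ : f 0 < f 1)
    (h₁ : f 1 < f 2) (h₂ : f 2 < f 3) : StrictMono f :=
  Fin.strictMono_iff_lt_succ.2 fun i => by fin_cases i <;> assumption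

/-- `4231` and `3412` are involutions, so `σ` contains them iff its inverse, the sequence of
ranks of `a`, does. -/
theorem not_has4231_of_avoids (hσ : StrictMono (a ∘ σ)) (h : Avoids σ perm4231) :
    ¬Has4231 a := fun ⟨i, j, k, l, hij, hjk, hkl, h₁, h₂, h₃⟩ =>
  h <| containsPattern_of_strictMono hσ (p := ![i, j, k, l]) (strictMono_fin_four hij hjk hkl)
    (strictMono_fin_four h₁ h₂ h₃)

theorem not_has3412_of_avoids (hσ : StrictMono (a ∘ σ)) (h : Avoids σ perm3412) :
    ¬Has3412 a := fun ⟨i, j, k, l, hij, hjk, hkl, h₁, h₂, h₃⟩ =>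
  h <| containsPattern_of_strictMono hσ (p := ![i, j, k, l]) (strictMono_fin_four hij hjk hkl)
    (strictMono_fin_four h₁ h₂ h₃)

end Patterns

/-- Corollary 3.7 (cor_2good): for `N ≥ 2`, a regular multisegment `m = Δ_1 + ⋯ + Δ_N`
with `b_1 > ⋯ > b_N` whose associated permutation `σ` avoids the patterns `4231` and
`3412` has at least two distinct good segments. -/
theorem statement8 {N : ℕ} (hN : 2 ≤ N) (Δ : Fin N → Segment) (hreg : Regular Δ)
    (hb : ∀ i j : Fin N, i < j → (Δ j).b < (Δ i).b)
    (σ : Equiv.Perm (Fin N))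
    (hσ : ∀ i j : Fin N, i < j → (Δ (σ i)).a < (Δ (σ j)).a)
    (hav1 : Avoids σ perm4231) (hav2 : Avoids σ perm3412) :
    ∃ i j : Fin N, i ≠ j ∧ Good Δ i ∧ Good Δ j := by
  have : Nontrivial (Fin N) := Fin.nontrivial_iff_two_le.2 hN
  obtain ⟨u, v, huv, hu, hv⟩ := exists_ne_isGood hreg.1
    (not_has4231_of_avoids hσ hav1) (not_has3412_of_avoids hσ hav2)
  exact ⟨u, v, huv, good_of_isGood hb hreg.1 hu, good_of_isGood hb hreg.1 hv⟩
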